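/- arXiv:1412.3340 — 3 statements merged into one kernel-verified Lean document; each statement's English description precedes it below -/
import Mathlib

section
/- A finite graph G satisfies the CDψ(d,0) inequality (Γ₂^ψ(f) ≥ (1/d)(Δ^ψ f)² for all positive f) if and only if every positive solution u of the heat equation on G satisfies 𝓛(−u·Δ^ψ u) ≥ (2/d)·u·(Δ^ψ u)². -/
/-!
Along a positive solution `u` of the heat equation, `∂ₜ u = Δu` turns the time derivative of
`Δ^ψ u` into `Ω^ψ u`, and the heat operator applied to `-u Δ^ψ u` becomes exactly
`2 u Γ₂^ψ(u)`. Since `u > 0`, the heat-flow inequality at `(v, t)` is the `CDψ(d,0)` inequality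
for the positive function `u(·, t)` at `v`; conversely, every positive `f` is the initial value
of the positive solution `e^{tΔ} f`. Positivity of `e^{tΔ} f` comes from
`e^{tΔ} = e^{-tN} e^{t(Δ + N)}` with `N = |V|`, where `Δ + N` has nonnegative entries.
-/

noncomputable section

open Finset Filter

variable {V : Type*} [Fintype V]

/-- Graph Laplacian `Δf(v) = Σ_{w∼v} (f w − f v)`. -/
def lap (Adj : V → V → Prop) [DecidableRel Adj] (f : V → ℝ) (v : V) : ℝ :=
  ∑ w, if Adj v w then f w - f v else 0

/-- ψ-Laplacian `(Δ^ψ f)(v) = Δ[ψ(f/f v)](v)`. -/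
def psiLap (Adj : V → V → Prop) [DecidableRel Adj] (ψ : ℝ → ℝ) (f : V → ℝ) (v : V) : ℝ :=
  lap Adj (fun w => ψ (f w / f v)) v

/-- `ψ̄(x) = ψ'(1)(x−1) − (ψ x − ψ 1)`. -/
def psibar (ψ : ℝ → ℝ) (x : ℝ) : ℝ := deriv ψ 1 * (x - 1) - (ψ x - ψ 1)

/-- ψ-gradient `Γ^ψ = Δ^{ψ̄}`. -/
def gammaPsi (Adj : V → V → Prop) [DecidableRel Adj] (ψ : ℝ → ℝ) (f : V → ℝ) (v : V) : ℝ :=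
  lap Adj (fun w => psibar ψ (f w / f v)) v

/-- `(Ω^ψ f)(v)`. -/
def omegaPsi (Adj : V → V → Prop) [DecidableRel Adj] (ψ : ℝ → ℝ) (f : V → ℝ) (v : V) : ℝ :=
  lap Adj (fun w => deriv ψ (f w / f v) * (f w / f v) *
    (lap Adj f w / f w - lap Adj f v / f v)) v

/-- Second ψ-gradient `Γ₂^ψ`. -/
def gamma2Psi (Adj : V → V → Prop) [DecidableRel Adj] (ψ : ℝ → ℝ) (f : V → ℝ) (v : V) : ℝ :=
  (omegaPsi Adj ψ f v + lap Adj f v * psiLap Adj ψ f v / f v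
    - lap Adj (fun w => f w * psiLap Adj ψ f w) v / f v) / 2

/-- Classical gradient form `Γ(f) = (Δ(f²) − 2fΔf)/2`. -/
def gammaF (Adj : V → V → Prop) [DecidableRel Adj] (f : V → ℝ) (v : V) : ℝ :=
  (lap Adj (fun w => f w * f w) v - 2 * f v * lap Adj f v) / 2

/-- Bilinear gradient form `Γ(f,g)`. -/
def gammaBil (Adj : V → V → Prop) [DecidableRel Adj] (f g : V → ℝ) (v : V) : ℝ :=
  (lap Adj (fun w => f w * g w) v - f v * lap Adj g v - g v * lap Adj f v) / 2

/-- Second gradient form `Γ₂(f) = (ΔΓ(f) − 2Γ(f,Δf))/2`. -/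
def gamma2F (Adj : V → V → Prop) [DecidableRel Adj] (f : V → ℝ) (v : V) : ℝ :=
  (lap Adj (gammaF Adj f) v - 2 * gammaBil Adj f (lap Adj f) v) / 2

open NormedSpace

theorem le_exp_smul_apply_of_nonneg {ι : Type*} [Fintype ι] (S : (ι → ℝ) →L[ℝ] (ι → ℝ))
    (hS : ∀ g, 0 ≤ g → 0 ≤ S g) {t : ℝ} (ht : 0 ≤ t) {g : ι → ℝ} (hg : 0 ≤ g) :
    g ≤ exp (t • S) g := by
  have hpow : ∀ n : ℕ, 0 ≤ ((t • S) ^ n) g := by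
    intro n
    induction n with
    | zero => simpa using hg
    | succ n ih =>
      rw [pow_succ']
      exact smul_nonneg ht (hS _ ih)
  have hsum := (expSeries_summable' (𝕂 := ℝ) (t • S)).mapL (ContinuousLinearMap.apply ℝ _ g)
  rw [exp_eq_tsum ℝ, ← ContinuousLinearMap.apply_apply g,
    (ContinuousLinearMap.apply ℝ _ g).map_tsum (expSeries_summable' (t • S))]
  simpa using hsum.le_tsum 0 fun n _ => by
    simpa using smul_nonneg (inv_nonneg.2 (n.factorial.cast_nonneg : (0 : ℝ) ≤ _)) (hpow n)

theorem exp_smul_add_smul_one {𝔸 : Type*} [NormedRing 𝔸] [NormedAlgebra ℝ 𝔸] [CompleteSpace 𝔸]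
    (A : 𝔸) (c t : ℝ) : exp (t • (A + c • 1)) = Real.exp (t * c) • exp (t • A) := by
  have hcomm : Commute (t • A) ((t * c) • (1 : 𝔸)) := (Commute.one_right _).smul_right _
  have hball : ∀ x : 𝔸, x ∈ Metric.eball (0 : 𝔸) (expSeries ℝ 𝔸).radius := fun x =>
    (expSeries_radius_eq_top ℝ 𝔸).symm ▸ edist_lt_top _ _
  rw [smul_add, smul_smul, exp_add_of_commute_of_mem_ball hcomm (hball _) (hball _),
    ← Algebra.algebraMap_eq_smul_one, ← algebraMap_exp_comm, ← Real.exp_eq_exp_ℝ,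
    Algebra.algebraMap_eq_smul_one, mul_smul_one]

section Laplacian

variable (Adj : V → V → Prop) [DecidableRel Adj]

theorem lap_neg (g : V → ℝ) (v : V) : lap Adj (fun w => -g w) v = -lap Adj g v := by
  simp only [lap, ← Finset.sum_neg_distrib]
  exact Finset.sum_congr rfl fun w _ => by split <;> ring

theorem lap_add_card_mul (g : V → ℝ) (v : V) :
    lap Adj g v + Fintype.card V * g v = ∑ w, if Adj v w then g w else g v := by
  rw [← nsmul_eq_mul, ← Finset.card_univ, ← Finset.sum_const, lap, ← Finset.sum_add_distrib]
  exact Finset.sum_congr rfl fun w _ => by split <;> ring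

theorem lap_add_card_mul_nonneg {g : V → ℝ} (hg : 0 ≤ g) (v : V) :
    0 ≤ lap Adj g v + Fintype.card V * g v := by
  rw [lap_add_card_mul]
  exact Finset.sum_nonneg fun w _ => by split <;> apply hg

def lapCLM : (V → ℝ) →L[ℝ] (V → ℝ) :=
  LinearMap.toContinuousLinearMap
    { toFun := lap Adj
      map_add' := fun f g => by
        funext v
        simp only [lap, Pi.add_apply, ← Finset.sum_add_distrib]
        exact Finset.sum_congr rfl fun w _ => by split <;> ring
      map_smul' := fun c f => by
        funext v
        simp only [lap, Pi.smul_apply, smul_eq_mul, RingHom.id_apply, Finset.mul_sum]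
        exact Finset.sum_congr rfl fun w _ => by split <;> ring }

theorem hasDerivAt_exp_smul_lapCLM_apply (f : V → ℝ) (v : V) (t : ℝ) :
    HasDerivAt (fun s => exp (s • lapCLM Adj) f v) (lap Adj (exp (t • lapCLM Adj) f) v) t :=
  ((ContinuousLinearMap.proj v).comp (ContinuousLinearMap.apply ℝ (V → ℝ) f)).hasFDerivAt
    |>.comp_hasDerivAt t (hasDerivAt_exp_smul_const' (lapCLM Adj) t)

theorem exp_smul_lapCLM_apply_pos {f : V → ℝ} (hf : ∀ v, 0 < f v) {t : ℝ} (ht : 0 ≤ t) (v : V) :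
    0 < exp (t • lapCLM Adj) f v := by
  set N : ℝ := (Fintype.card V : ℝ)
  have hshift := exp_smul_add_smul_one (lapCLM Adj + N • 1) (-N) t
  rw [add_assoc, ← add_smul, add_neg_cancel, zero_smul, add_zero] at hshift
  have hle := le_exp_smul_apply_of_nonneg (lapCLM Adj + N • 1)
    (fun g hg => lap_add_card_mul_nonneg Adj hg) ht (fun w => (hf w).le)
  rw [hshift]
  exact mul_pos (Real.exp_pos _) ((hf v).trans_le (hle v))

theorem exists_pos_heat_solution {f : V → ℝ} (hf : ∀ v, 0 < f v) :
    ∃ u : V → ℝ → ℝ, (∀ v, Differentiable ℝ (u v)) ∧ (∀ v t, 0 ≤ t → 0 < u v t) ∧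
      (∀ v t, deriv (u v) t = lap Adj (fun w => u w t) v) ∧ (fun w => u w 0) = f :=
  ⟨fun v t => exp (t • lapCLM Adj) f v,
    fun v t => (hasDerivAt_exp_smul_lapCLM_apply Adj f v t).differentiableAt,
    fun v _ ht => exp_smul_lapCLM_apply_pos Adj hf ht v,
    fun v t => (hasDerivAt_exp_smul_lapCLM_apply Adj f v t).deriv,
    by simp⟩

theorem hasDerivAt_lap {g : V → ℝ → ℝ} {g' : V → ℝ} {t : ℝ} (hg : ∀ w, HasDerivAt (g w) (g' w) t)
    (v : V) : HasDerivAt (fun s => lap Adj (fun w => g w s) v) (lap Adj g' v) t := by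
  refine HasDerivAt.fun_sum fun w _ => ?_
  split
  · exact (hg w).sub (hg v)
  · exact hasDerivAt_const t 0

theorem hasDerivAt_comp_div {ψ : ℝ → ℝ} {a b : ℝ → ℝ} {a' b' t : ℝ}
    (hψ : DifferentiableAt ℝ ψ (a t / b t)) (ha : HasDerivAt a a' t) (hb : HasDerivAt b b' t)
    (ha0 : a t ≠ 0) (hb0 : b t ≠ 0) :
    HasDerivAt (fun s => ψ (a s / b s))
      (deriv ψ (a t / b t) * (a t / b t) * (a' / a t - b' / b t)) t := by
  refine (hψ.hasDerivAt.comp t (ha.div hb hb0)).congr_deriv ?_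
  field_simp

theorem hasDerivAt_psiLap {ψ : ℝ → ℝ} (hψ : DifferentiableOn ℝ ψ (Set.Ioi 0)) {u : V → ℝ → ℝ}
    {u' : V → ℝ} {t : ℝ} (hu : ∀ w, HasDerivAt (u w) (u' w) t) (hpos : ∀ w, 0 < u w t) (v : V) :
    HasDerivAt (fun s => psiLap Adj ψ (fun z => u z s) v)
      (lap Adj (fun w => deriv ψ (u w t / u v t) * (u w t / u v t) *
        (u' w / u w t - u' v / u v t)) v) t :=
  hasDerivAt_lap Adj (fun w => hasDerivAt_comp_div
    (hψ.differentiableAt (Ioi_mem_nhds (div_pos (hpos w) (hpos v)))) (hu w) (hu v)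
    (hpos w).ne' (hpos v).ne') v

theorem two_mul_mul_gamma2Psi (ψ : ℝ → ℝ) {f : V → ℝ} {v : V} (hv : f v ≠ 0) :
    2 * f v * gamma2Psi Adj ψ f v = f v * omegaPsi Adj ψ f v + lap Adj f v * psiLap Adj ψ f v
      - lap Adj (fun w => f w * psiLap Adj ψ f w) v := by
  rw [gamma2Psi]
  field_simp

theorem lap_sub_deriv_neg_mul_psiLap {ψ : ℝ → ℝ} (hψ : DifferentiableOn ℝ ψ (Set.Ioi 0))
    {u : V → ℝ → ℝ} {t : ℝ} (hheat : ∀ w, HasDerivAt (u w) (lap Adj (fun z => u z t) w) t)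
    (hpos : ∀ w, 0 < u w t) (v : V) :
    lap Adj (fun w => -(u w t * psiLap Adj ψ (fun z => u z t) w)) v
      - deriv (fun s => -(u v s * psiLap Adj ψ (fun z => u z s) v)) t
    = 2 * u v t * gamma2Psi Adj ψ (fun z => u z t) v := by
  have hderiv := ((hheat v).fun_mul (hasDerivAt_psiLap Adj hψ hheat hpos v)).fun_neg
  rw [hderiv.deriv, lap_neg, two_mul_mul_gamma2Psi Adj ψ (f := fun z => u z t) (hpos v).ne',
    omegaPsi]
  ring

end Laplacian

theorem cdpsi_characterization_general (Adj : V → V → Prop) [DecidableRel Adj]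
    (ψ : ℝ → ℝ) (hψ : ContDiffOn ℝ 1 ψ (Set.Ioi 0)) (d : ℝ) :
    (∀ f : V → ℝ, (∀ v, 0 < f v) → ∀ v,
        gamma2Psi Adj ψ f v ≥ (1 / d) * (psiLap Adj ψ f v) ^ 2) ↔
    (∀ u : V → ℝ → ℝ, (∀ v, Differentiable ℝ (u v)) →
        (∀ v t, 0 ≤ t → 0 < u v t) →
        (∀ v t, 0 ≤ t → deriv (u v) t = lap Adj (fun w => u w t) v) →
        ∀ v : V, ∀ t : ℝ, 0 ≤ t →
          lap Adj (fun w => -(u w t * psiLap Adj ψ (fun z => u z t) w)) v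
            - deriv (fun s => -(u v s * psiLap Adj ψ (fun z => u z s) v)) t
          ≥ (2 / d) * u v t * (psiLap Adj ψ (fun z => u z t) v) ^ 2) := by
  have hψ' := hψ.differentiableOn one_ne_zero
  have scale : ∀ {a G P : ℝ}, 0 < a → ((2 / d) * a * P ^ 2 ≤ 2 * a * G ↔ 1 / d * P ^ 2 ≤ G) :=
    fun {a G P} ha => by
      rw [show 2 / d * a * P ^ 2 = 2 * a * (1 / d * P ^ 2) by ring]
      exact mul_le_mul_iff_right₀ (by positivity)
  constructor
  · intro hCD u hdiff hpos hheat v t ht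
    rw [ge_iff_le, lap_sub_deriv_neg_mul_psiLap Adj hψ'
      (fun w => hheat w t ht ▸ (hdiff w t).hasDerivAt) (fun w => hpos w t ht), scale (hpos v t ht)]
    exact hCD _ (fun w => hpos w t ht) v
  · intro hheatCD f hf v
    obtain ⟨u, hdiff, hpos, hheat, rfl⟩ := exists_pos_heat_solution Adj hf
    have h := hheatCD u hdiff hpos (fun w t _ => hheat w t) v 0 le_rfl
    rwa [ge_iff_le, lap_sub_deriv_neg_mul_psiLap Adj hψ'
      (fun w => hheat w 0 ▸ (hdiff w 0).hasDerivAt) (fun w => hpos w 0 le_rfl),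
      scale (hpos v 0 le_rfl)] at h

/-- Characterization of the `CDψ(d,0)` condition via positive solutions of the heat
equation. -/
theorem cdpsi_characterization (Adj : V → V → Prop) [DecidableRel Adj]
    (hsymm : Symmetric Adj) (hloop : ∀ v, ¬Adj v v)
    (ψ : ℝ → ℝ) (hψ : ContDiffOn ℝ 1 ψ (Set.Ioi 0)) (d : ℝ) (hd : 0 < d) :
    (∀ f : V → ℝ, (∀ v, 0 < f v) → ∀ v,
        gamma2Psi Adj ψ f v ≥ (1 / d) * (psiLap Adj ψ f v) ^ 2) ↔
    (∀ u : V → ℝ → ℝ, (∀ v, Differentiable ℝ (u v)) →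
        (∀ v t, 0 ≤ t → 0 < u v t) →
        (∀ v t, 0 ≤ t → deriv (u v) t = lap Adj (fun w => u w t) v) →
        ∀ v : V, ∀ t : ℝ, 0 ≤ t →
          lap Adj (fun w => -(u w t * psiLap Adj ψ (fun z => u z t) w)) v
            - deriv (fun s => -(u v s * psiLap Adj ψ (fun z => u z s) v)) t
          ≥ (2 / d) * u v t * (psiLap Adj ψ (fun z => u z t) v) ^ 2) :=
  cdpsi_characterization_general Adj ψ hψ d
end
end

section
/- If ψ ∈ C¹((0,∞)) is concave with second derivative at 1 existing and ψ''(1) < 0, then the Harnack constant H_ψ = sup_{x>1} (log x)²/ψ̄(x) satisfies 0 < H_ψ < ∞, where ψ̄(x) = ψ'(1)(x−1) − (ψ(x)−ψ(1)). -/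
noncomputable section

open Finset Filter

variable {V : Type*} [Fintype V]

/-! Near `1`, continuity of `ψ''` gives `ψ̄'' = -ψ'' ≥ -ψ''(1)/2 > 0`, so a second-order Taylor
bound yields `ψ̄ x ≥ ε (x - 1)²` on some `[1, 1 + δ]`; beyond `1 + δ`, convexity of `ψ̄` forces
linear growth `ψ̄ x ≥ m (x - 1)`. As `(log x)² ≤ (x - 1)²` and `(log x)² ≤ 4 (x - 1)`, together
`ψ̄ x ≥ c (log x)²` on `(1, ∞)`: the ratio is positive and bounded by `1 / c`. -/

open Set Topology

theorem image_le_of_hasDerivAt_le {f g f' g' : ℝ → ℝ} {a b : ℝ}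
    (hf : ∀ x ∈ Icc a b, HasDerivAt f (f' x) x) (hg : ∀ x ∈ Icc a b, HasDerivAt g (g' x) x)
    (ha : f a ≤ g a) (hle : ∀ x ∈ Ico a b, f' x ≤ g' x) : ∀ x ∈ Icc a b, f x ≤ g x :=
  fun _ hx => image_le_of_deriv_right_le_deriv_boundary
    (fun x hx => (hf x hx).continuousAt.continuousWithinAt)
    (fun x hx => (hf x (Ico_subset_Icc_self hx)).hasDerivWithinAt) ha
    (fun x hx => (hg x hx).continuousAt.continuousWithinAt)
    (fun x hx => (hg x (Ico_subset_Icc_self hx)).hasDerivWithinAt) hle hx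

theorem taylor_quadratic_le_of_le_deriv2 {f f' f'' : ℝ → ℝ} {a b c : ℝ}
    (hf : ∀ x ∈ Icc a b, HasDerivAt f (f' x) x) (hf' : ∀ x ∈ Icc a b, HasDerivAt f' (f'' x) x)
    (hc : ∀ x ∈ Ico a b, c ≤ f'' x) :
    ∀ x ∈ Icc a b, f a + f' a * (x - a) + c * (x - a) ^ 2 / 2 ≤ f x := by
  have hlin : ∀ x ∈ Icc a b, HasDerivAt (fun x => f' a + c * (x - a)) c x := fun x _ => by
    simpa using ((hasDerivAt_id x).sub_const a).const_mul c |>.const_add (f' a)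
  have hquad : ∀ x ∈ Icc a b, HasDerivAt (fun x => f a + f' a * (x - a) + c * (x - a) ^ 2 / 2)
      (f' a + c * (x - a)) x := by
    intro x _
    have hsub : HasDerivAt (fun y => y - a) 1 x := (hasDerivAt_id' x).sub_const a
    have hsq : HasDerivAt (fun y => c * (y - a) ^ 2 / 2) (c * (x - a)) x :=
      (((hsub.pow 2).const_mul c).div_const 2).congr_deriv (by push_cast; ring)
    exact ((hsub.const_mul (f' a)).const_add (f a)).add hsq |>.congr_deriv (by ring)
  have hderiv := image_le_of_hasDerivAt_le hlin hf' (by simp) hc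
  exact image_le_of_hasDerivAt_le hquad hf (by simp) fun x hx => hderiv x (Ico_subset_Icc_self hx)

theorem Real.log_sq_le_four_mul_sub_one {x : ℝ} (hx : 1 ≤ x) : Real.log x ^ 2 ≤ 4 * (x - 1) := by
  have hsqrt : 1 ≤ √x := Real.one_le_sqrt.mpr hx
  have hlog : Real.log x = 2 * Real.log √x := by
    rw [Real.log_sqrt (by linarith)]; ring
  have h0 : 0 ≤ Real.log √x := Real.log_nonneg hsqrt
  have h1 : Real.log √x ≤ √x - 1 := Real.log_le_sub_one_of_pos (by linarith)
  have hsq : √x ^ 2 = x := Real.sq_sqrt (by linarith)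
  rw [hlog]
  nlinarith

theorem hasDerivAt_psibar {ψ : ℝ → ℝ} {x : ℝ} (hx : DifferentiableAt ℝ ψ x) :
    HasDerivAt (psibar ψ) (deriv ψ 1 - deriv ψ x) x := by
  have := (((hasDerivAt_id x).sub_const 1).const_mul (deriv ψ 1)).sub (hx.hasDerivAt.sub_const (ψ 1))
  rwa [mul_one] at this

@[simp]
theorem psibar_one (ψ : ℝ → ℝ) : psibar ψ 1 = 0 := by simp [psibar]

theorem ConcaveOn.convexOn_psibar {ψ : ℝ → ℝ} {s : Set ℝ} (hψ : ConcaveOn ℝ s ψ) :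
    ConvexOn ℝ s (psibar ψ) := by
  refine ⟨hψ.1, fun x hx y hy a b ha hb hab => ?_⟩
  have := hψ.2 hx hy ha hb hab
  simp only [psibar, smul_eq_mul] at this ⊢
  linear_combination this + (deriv ψ 1 - ψ 1) * hab

theorem exists_mul_sq_le_psibar {ψ : ℝ → ℝ} {s : Set ℝ} (hψ : ContDiffOn ℝ 2 ψ s) (hs : IsOpen s)
    (h1 : (1 : ℝ) ∈ s) (h2 : deriv (deriv ψ) 1 < 0) :
    ∃ δ > (0 : ℝ), ∃ ε > (0 : ℝ), ∀ x ∈ Icc 1 (1 + δ), ε * (x - 1) ^ 2 ≤ psibar ψ x := by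
  have hdψ : ContDiffOn ℝ 1 (deriv ψ) s := hψ.deriv_of_isOpen hs le_rfl
  have hcont : ContinuousAt (deriv (deriv ψ)) 1 :=
    (hdψ.continuousOn_deriv_of_isOpen hs le_rfl).continuousAt (hs.mem_nhds h1)
  have hnear : ∀ᶠ x in 𝓝[≥] 1, x ∈ s ∧ deriv (deriv ψ) x < deriv (deriv ψ) 1 / 2 :=
    nhdsWithin_le_nhds <| (hs.eventually_mem h1).and (hcont.eventually_lt_const (by linarith))
  obtain ⟨u, hu, hsub⟩ := mem_nhdsGE_iff_exists_Icc_subset.mp hnear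
  refine ⟨u - 1, by linarith, -deriv (deriv ψ) 1 / 4, by linarith, fun x hx => ?_⟩
  rw [add_sub_cancel] at hx
  have hψ' : ∀ y ∈ Icc 1 u, HasDerivAt (psibar ψ) (deriv ψ 1 - deriv ψ y) y := fun y hy =>
    hasDerivAt_psibar ((hψ.differentiableOn two_ne_zero).differentiableAt (hs.mem_nhds (hsub hy).1))
  have hψ'' : ∀ y ∈ Icc 1 u, HasDerivAt (fun y => deriv ψ 1 - deriv ψ y) (-deriv (deriv ψ) y) y :=
    fun y hy => ((hdψ.differentiableOn one_ne_zero).differentiableAt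
      (hs.mem_nhds (hsub hy).1)).hasDerivAt.const_sub _
  have := taylor_quadratic_le_of_le_deriv2 hψ' hψ'' (c := -deriv (deriv ψ) 1 / 2)
    (fun y hy => by linarith [(hsub (Ico_subset_Icc_self hy)).2]) x hx
  simp only [psibar_one, sub_self, zero_mul, zero_add] at this
  linarith

theorem exists_mul_log_sq_le_psibar {ψ : ℝ → ℝ} (hψ : ContDiffOn ℝ 2 ψ (Ioi 0))
    (hconc : ConcaveOn ℝ (Ioi 0) ψ) (h2 : deriv (deriv ψ) 1 < 0) :
    ∃ c > (0 : ℝ), ∀ x, 1 < x → c * Real.log x ^ 2 ≤ psibar ψ x := by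
  obtain ⟨δ, hδ, ε, hε, hnear⟩ := exists_mul_sq_le_psibar hψ isOpen_Ioi (mem_Ioi.mpr one_pos) h2
  set m := psibar ψ (1 + δ) / δ
  have hm : ε * δ ≤ m := by
    have := hnear (1 + δ) ⟨by linarith, le_rfl⟩
    rw [add_sub_cancel_left] at this
    rw [le_div_iff₀ hδ]
    linarith
  -- Beyond `1 + δ`, convexity keeps `ψ̄` above its chord through `1` and `1 + δ`.
  have hfar : ∀ x, 1 + δ ≤ x → m * (x - 1) ≤ psibar ψ x := fun x hx => by
    have := hconc.convexOn_psibar.secant_mono (a := 1) (x := 1 + δ) (y := x) (mem_Ioi.mpr one_pos)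
      (by simp; linarith) (by simp; linarith) (by simp; linarith) (by linarith) hx
    rwa [psibar_one, sub_zero, sub_zero, add_sub_cancel_left, le_div_iff₀ (by linarith)] at this
  refine ⟨min ε (m / 4), lt_min hε (by nlinarith), fun x hx => ?_⟩
  have hlog0 : 0 ≤ Real.log x := Real.log_nonneg hx.le
  rcases le_or_gt x (1 + δ) with hxδ | hxδ
  · have hlog : Real.log x ^ 2 ≤ (x - 1) ^ 2 :=
      pow_le_pow_left₀ hlog0 (Real.log_le_sub_one_of_pos (by linarith)) 2
    calc min ε (m / 4) * Real.log x ^ 2 ≤ ε * (x - 1) ^ 2 :=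
          mul_le_mul (min_le_left _ _) hlog (sq_nonneg _) hε.le
      _ ≤ psibar ψ x := hnear x ⟨hx.le, hxδ⟩
  · calc min ε (m / 4) * Real.log x ^ 2 ≤ m / 4 * (4 * (x - 1)) :=
          mul_le_mul (min_le_right _ _) (Real.log_sq_le_four_mul_sub_one hx.le) (sq_nonneg _)
            (by nlinarith)
      _ = m * (x - 1) := by ring
      _ ≤ psibar ψ x := hfar x hxδ.le

/-- Non-degeneration of the Harnack constant: if `ψ` is concave with `ψ''(1) < 0`,
then `H_ψ = sup_{x>1} (log x)²/ψ̄(x)` is finite and positive. -/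
theorem harnack_constant_pos_finite (ψ : ℝ → ℝ)
    (hψ : ContDiffOn ℝ 2 ψ (Set.Ioi 0))
    (hconc : ConcaveOn ℝ (Set.Ioi 0) ψ)
    (h2 : deriv (deriv ψ) 1 < 0) :
    ∃ H : ℝ, 0 < H ∧
      IsLUB {y : ℝ | ∃ x : ℝ, 1 < x ∧ y = (Real.log x) ^ 2 / psibar ψ x} H := by
  obtain ⟨c, hc, hle⟩ := exists_mul_log_sq_le_psibar hψ hconc h2
  have hlog : ∀ x, 1 < x → 0 < Real.log x ^ 2 := fun x hx => pow_pos (Real.log_pos hx) 2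
  have hψpos : ∀ x, 1 < x → 0 < psibar ψ x := fun x hx =>
    (mul_pos hc (hlog x hx)).trans_le (hle x hx)
  set S := {y : ℝ | ∃ x : ℝ, 1 < x ∧ y = (Real.log x) ^ 2 / psibar ψ x}
  have hbdd : ∀ y ∈ S, y ≤ c⁻¹ := by
    rintro y ⟨x, hx, rfl⟩
    rw [div_le_iff₀ (hψpos x hx), le_inv_mul_iff₀ hc]
    exact hle x hx
  have h2S : Real.log 2 ^ 2 / psibar ψ 2 ∈ S := ⟨2, one_lt_two, rfl⟩
  have h2pos : 0 < Real.log 2 ^ 2 / psibar ψ 2 := div_pos (hlog 2 one_lt_two) (hψpos 2 one_lt_two)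
  exact ⟨sSup S, h2pos.trans_le (le_csSup ⟨_, hbdd⟩ h2S), isLUB_csSup ⟨_, h2S⟩ ⟨_, hbdd⟩⟩
end
end

section
/- Degeneration of C_ψ: (1) if ψ ∈ C¹((0,∞)) is concave then ψ̃(x,y) ≥ 0 for all x,y > 0, where ψ̃(x,y) = (ψ'(x)+ψ'(y))(1−xy) + x(ψ(y)−ψ(1/x)) + y(ψ(x)−ψ(1/y)); (2) if there exists x > 0 with ψ(x) + ψ(1/x) ≠ 2ψ(1), then ψ̃(x, 1/x) = 0 while (ψ(x)+ψ(1/x)−2ψ(1))² > 0, so the infimum C_ψ := inf_{x,y>0} ψ̃(x,y)/(ψ(x)+ψ(y)−2ψ(1))² is ≤ 0. -/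
noncomputable section

open Finset Filter

variable {V : Type*} [Fintype V]

/-- `ψ̃(x,y) = (ψ'(x)+ψ'(y))(1−xy) + x(ψ(y)−ψ(1/x)) + y(ψ(x)−ψ(1/y))`. -/
noncomputable def psiTilde (ψ : ℝ → ℝ) (x y : ℝ) : ℝ :=
  (deriv ψ x + deriv ψ y) * (1 - x * y) + x * (ψ y - ψ (1 / x)) + y * (ψ x - ψ (1 / y))

/-!
Concavity puts the graph of `ψ` below each of its tangent lines, and `ψ̃(x, y)` is exactly
`y` times the gap at `1/y` below the tangent at `x` plus `x` times the gap at `1/x` below the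
tangent at `y`; hence `ψ̃ ≥ 0`. On the hyperbola `xy = 1` all terms of `ψ̃` cancel, so the
quotient defining `C_ψ` takes the value `0` at `(x, 1/x)`, and the infimum is `≤ 0`.
-/

open Set

lemma ConcaveOn.le_add_deriv_mul_sub {S : Set ℝ} {f : ℝ → ℝ} {a b : ℝ}
    (hf : ConcaveOn ℝ S f) (ha : a ∈ S) (hb : b ∈ S) (hfa : DifferentiableAt ℝ f a) :
    f b ≤ f a + deriv f a * (b - a) := by
  rcases lt_trichotomy a b with hab | rfl | hba
  · have h := hf.slope_le_deriv ha hb hab hfa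
    rw [slope_def_field, div_le_iff₀ (sub_pos.mpr hab)] at h
    linarith
  · simp
  · have h := hf.deriv_le_slope hb ha hba hfa
    rw [slope_def_field, le_div_iff₀ (sub_pos.mpr hba)] at h
    linarith

lemma psiTilde_eq_tangent_gaps (ψ : ℝ → ℝ) {x y : ℝ} (hx : x ≠ 0) (hy : y ≠ 0) :
    psiTilde ψ x y =
      y * (ψ x + deriv ψ x * (1 / y - x) - ψ (1 / y)) +
        x * (ψ y + deriv ψ y * (1 / x - y) - ψ (1 / x)) := by
  unfold psiTilde
  field_simp
  ring

lemma psiTilde_nonneg_of_concaveOn {ψ : ℝ → ℝ} (hψ : ConcaveOn ℝ (Ioi 0) ψ)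
    (hψd : DifferentiableOn ℝ ψ (Ioi 0)) {x y : ℝ} (hx : 0 < x) (hy : 0 < y) :
    0 ≤ psiTilde ψ x y := by
  have hψd' : ∀ z ∈ Ioi (0 : ℝ), DifferentiableAt ℝ ψ z := fun z hz =>
    hψd.differentiableAt (isOpen_Ioi.mem_nhds hz)
  have gap_x := hψ.le_add_deriv_mul_sub hx (one_div_pos.mpr hy) (hψd' x hx)
  have gap_y := hψ.le_add_deriv_mul_sub hy (one_div_pos.mpr hx) (hψd' y hy)
  rw [psiTilde_eq_tangent_gaps ψ hx.ne' hy.ne']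
  exact add_nonneg (mul_nonneg hy.le (sub_nonneg.mpr gap_x))
    (mul_nonneg hx.le (sub_nonneg.mpr gap_y))

lemma psiTilde_one_div_right (ψ : ℝ → ℝ) {x : ℝ} (hx : x ≠ 0) : psiTilde ψ x (1 / x) = 0 := by
  unfold psiTilde
  rw [one_div_one_div, mul_one_div_cancel hx]
  ring

/-- Degeneration of `C_ψ`: (1) concavity gives `ψ̃ ≥ 0`; (2) if the symmetry
`ψ(x)+ψ(1/x)=2ψ(1)` fails somewhere, then `ψ̃(x,1/x)=0` while the denominator is positive,
so `C_ψ ≤ 0`. -/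
theorem c_psi_degeneration (ψ : ℝ → ℝ) (hψ : ContDiffOn ℝ 1 ψ (Set.Ioi 0)) :
    (ConcaveOn ℝ (Set.Ioi 0) ψ →
      ∀ x y : ℝ, 0 < x → 0 < y → 0 ≤ psiTilde ψ x y) ∧
    (∀ x : ℝ, 0 < x → ψ x + ψ (1 / x) ≠ 2 * ψ 1 →
      psiTilde ψ x (1 / x) = 0 ∧ 0 < (ψ x + ψ (1 / x) - 2 * ψ 1) ^ 2) ∧
    ((∃ x : ℝ, 0 < x ∧ ψ x + ψ (1 / x) ≠ 2 * ψ 1) →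
      sInf {r : ℝ | ∃ x y : ℝ, 0 < x ∧ 0 < y ∧
        r = psiTilde ψ x y / (ψ x + ψ y - 2 * ψ 1) ^ 2} ≤ 0) := by
  refine ⟨?_, ?_, ?_⟩
  · exact fun hc x y hx hy =>
      psiTilde_nonneg_of_concaveOn hc (hψ.differentiableOn one_ne_zero) hx hy
  · exact fun x hx hne =>
      ⟨psiTilde_one_div_right ψ hx.ne', sq_pos_of_ne_zero (sub_ne_zero.mpr hne)⟩
  · rintro ⟨x, hx, -⟩
    refine Real.sInf_nonpos' ⟨0, ⟨x, 1 / x, hx, one_div_pos.mpr hx, ?_⟩, le_rfl⟩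
    rw [psiTilde_one_div_right ψ hx.ne', zero_div]
end
end
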